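/- arXiv:1901.08467 — 9 statements merged into one kernel-verified Lean document; each statement's English description precedes it below -/
import Mathlib

section
/- The Monotonicity axiom is valid: for every game, every play (δ,ω), coalitions C ⊆ D ⊆ 𝒜, real numbers 0 ≤ s ≤ t, and formula φ, if (δ,ω) ⊨ B^s_C φ then (δ,ω) ⊨ B^t_D φ. -/
/-- Formulas of the logic of blameworthiness with sacrifice over agent type `A`:
propositional variables, negation, implication, the universal modality `N`,
and the blameworthiness modality `B s C φ` ("coalition `C` is blameable for `φ`
with degree (sacrifice) `s`"). -/
inductive Formula (A : Type) : Type where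
  | var : ℕ → Formula A
  | neg : Formula A → Formula A
  | impl : Formula A → Formula A → Formula A
  | N : Formula A → Formula A
  | B : ℝ → Finset A → Formula A → Formula A

namespace Formula

/-- Disjunction, defined as usual. -/
def or {A : Type} (φ ψ : Formula A) : Formula A := (φ.neg).impl ψ

/-- Conjunction, defined as usual. -/
def and {A : Type} (φ ψ : Formula A) : Formula A := (φ.impl ψ.neg).neg

/-- The modality `N̄ φ := ¬ N ¬ φ` ("φ holds at some play"). -/
def nbar {A : Type} (φ : Formula A) : Formula A := (Formula.N φ.neg).neg

/-- A contradictory formula (used as the empty disjunction). -/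
def fbot {A : Type} : Formula A := ((Formula.var 0).impl (Formula.var 0)).neg

end Formula

/-- Finite disjunction `χ₁ ∨ ⋯ ∨ χₙ` of a list of formulas. -/
def bigOr {A : Type} : List (Formula A) → Formula A
  | [] => Formula.fbot
  | φ :: l => l.foldl Formula.or φ

/-- A game `(Δ, ‖·‖, d₀, Ω, P, π)`: a nonempty set of actions `Δ` with
nonnegative costs and a zero-cost action `d₀`, a set of outcomes `Ω`,
a set of plays `P` (pairs of a complete action profile and an outcome),
and a valuation `π` of propositional variables by sets of plays. -/
structure Game (A : Type) where
  Δ : Type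
  Ω : Type
  cost : Δ → ℝ
  cost_nonneg : ∀ d : Δ, 0 ≤ cost d
  d0 : Δ
  cost_d0 : cost d0 = 0
  P : Set ((A → Δ) × Ω)
  π : ℕ → Set ((A → Δ) × Ω)

/-- Satisfaction relation `(δ,ω) ⊨ φ`.  In particular
`(δ,ω) ⊨ B s C φ` iff `(δ,ω) ⊨ φ` and there is an action profile `γ` of the
coalition `C` of total cost `∑ a ∈ C, ‖γ(a)‖ ≤ s` such that every play
agreeing with `γ` on `C` falsifies `φ`. -/
def Sat {A : Type} (G : Game A) : ((A → G.Δ) × G.Ω) → Formula A → Prop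
  | p, .var n => p ∈ G.π n
  | p, .neg φ => ¬ Sat G p φ
  | p, .impl φ ψ => Sat G p φ → Sat G p ψ
  | _, .N φ => ∀ q ∈ G.P, Sat G q φ
  | p, .B s C φ => Sat G p φ ∧ ∃ γ : A → G.Δ,
      (∑ a ∈ C, G.cost (γ a)) ≤ s ∧
      ∀ q ∈ G.P, (∀ a ∈ C, q.1 a = γ a) → ¬ Sat G q φ

/-- The Monotonicity axiom is valid: if `C ⊆ D`, `0 ≤ s ≤ t`, and
`(δ,ω) ⊨ B^s_C φ`, then `(δ,ω) ⊨ B^t_D φ`. -/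
theorem monotonicity_valid {A : Type} (G : Game A)
    (p : (A → G.Δ) × G.Ω) (hp : p ∈ G.P) (C D : Finset A) (s t : ℝ)
    (hCD : C ⊆ D) (hs : 0 ≤ s) (hst : s ≤ t) (φ : Formula A)
    (h : Sat G p (Formula.B s C φ)) :
    Sat G p (Formula.B t D φ) := by
  classical
  obtain ⟨hφ, γ, hcost, hfal⟩ := h
  refine ⟨hφ, fun a => if a ∈ C then γ a else G.d0, ?_, ?_⟩
  · calc ∑ a ∈ D, G.cost (if a ∈ C then γ a else G.d0)
        = ∑ a ∈ C, G.cost (if a ∈ C then γ a else G.d0) := by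
          refine (Finset.sum_subset hCD fun a _ ha => ?_).symm
          simp [ha, G.cost_d0]
      _ = ∑ a ∈ C, G.cost (γ a) := Finset.sum_congr rfl (fun a ha => by simp [ha])
      _ ≤ t := hcost.trans hst
  · intro q hq hagree
    exact hfal q hq fun a ha => by simpa [ha] using hagree a (hCD ha)
end

section
/- The Joint Responsibility axiom is valid: for every game, every play (δ,ω), disjoint coalitions C and D, real numbers s,t ≥ 0, and formulas φ, ψ: if there exists a play where B^s_C φ holds, there exists a play where B^t_D ψ holds, and (δ,ω) ⊨ φ ∨ ψ, then (δ,ω) ⊨ B^{s+t}_{C∪D} (φ ∨ ψ). -/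
/-- The Joint Responsibility axiom is valid: for disjoint
coalitions `C`, `D`, if `B^s_C φ` holds at some play, `B^t_D ψ` holds at some
play, and `(δ,ω) ⊨ φ ∨ ψ`, then `(δ,ω) ⊨ B^{s+t}_{C∪D}(φ ∨ ψ)`. -/
theorem joint_responsibility_valid {A : Type} [DecidableEq A] (G : Game A)
    (p : (A → G.Δ) × G.Ω) (hp : p ∈ G.P) (C D : Finset A) (s t : ℝ)
    (hs : 0 ≤ s) (ht : 0 ≤ t) (hCD : Disjoint C D) (φ ψ : Formula A)
    (h1 : ∃ q ∈ G.P, Sat G q (Formula.B s C φ))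
    (h2 : ∃ q ∈ G.P, Sat G q (Formula.B t D ψ))
    (h3 : Sat G p (φ.or ψ)) :
    Sat G p (Formula.B (s + t) (C ∪ D) (φ.or ψ)) := by
  obtain ⟨q1, -, -, γ1, hc1, hf1⟩ := h1
  obtain ⟨q2, -, -, γ2, hc2, hf2⟩ := h2
  refine ⟨h3, fun a => if a ∈ C then γ1 a else γ2 a, ?_, ?_⟩
  · rw [Finset.sum_union hCD]
    have e1 : ∑ a ∈ C, G.cost (if a ∈ C then γ1 a else γ2 a)
        = ∑ a ∈ C, G.cost (γ1 a) :=
      Finset.sum_congr rfl (fun a ha => by simp [ha])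
    have e2 : ∑ a ∈ D, G.cost (if a ∈ C then γ1 a else γ2 a)
        = ∑ a ∈ D, G.cost (γ2 a) :=
      Finset.sum_congr rfl (fun a ha => by
        simp [Finset.disjoint_right.mp hCD ha])
    rw [e1, e2]; exact add_le_add hc1 hc2
  · intro q hq hagree hor
    have hφ : ¬ Sat G q φ := by
      apply hf1 q hq
      intro a ha
      have := hagree a (Finset.mem_union_left _ ha)
      simpa [ha] using this
    have hψ : ¬ Sat G q ψ := by
      apply hf2 q hq
      intro a ha
      have := hagree a (Finset.mem_union_right _ ha)
      simpa [Finset.disjoint_right.mp hCD ha] using this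
    exact hψ (hor hφ)
end

section
/- The Blame for Cause axiom is valid: for every game, every play (δ,ω), coalition C, real s ≥ 0, and formulas φ, ψ: if (δ,ω) ⊨ N(φ → ψ), (δ,ω) ⊨ B^s_C ψ, and (δ,ω) ⊨ φ, then (δ,ω) ⊨ B^s_C φ. -/
/-- The Blame for Cause axiom is valid: if `(δ,ω) ⊨ N(φ → ψ)`,
`(δ,ω) ⊨ B^s_C ψ`, and `(δ,ω) ⊨ φ`, then `(δ,ω) ⊨ B^s_C φ`. -/
theorem blame_for_cause_valid {A : Type} (G : Game A)
    (p : (A → G.Δ) × G.Ω) (hp : p ∈ G.P) (C : Finset A) (s : ℝ) (hs : 0 ≤ s)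
    (φ ψ : Formula A)
    (h1 : Sat G p (Formula.N (φ.impl ψ)))
    (h2 : Sat G p (Formula.B s C ψ))
    (h3 : Sat G p φ) :
    Sat G p (Formula.B s C φ) := by
  obtain ⟨hψ, γ, hγc, hγ⟩ := h2
  exact ⟨h3, γ, hγc, fun q hq hagree hφ => hγ q hq hagree (h1 q hq hφ)⟩
end

section
/- The Fairness axiom is valid: for every game, every play (δ,ω), coalition C, real s ≥ 0, and formula φ: if (δ,ω) ⊨ B^s_C φ then (δ,ω) ⊨ N(φ → B^s_C φ), i.e., at every play of the game where φ holds, B^s_C φ also holds. -/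
/-- The Fairness axiom is valid: if `(δ,ω) ⊨ B^s_C φ` then
`(δ,ω) ⊨ N(φ → B^s_C φ)`. -/
theorem fairness_valid {A : Type} (G : Game A)
    (p : (A → G.Δ) × G.Ω) (hp : p ∈ G.P) (C : Finset A) (s : ℝ) (hs : 0 ≤ s)
    (φ : Formula A) (h : Sat G p (Formula.B s C φ)) :
    Sat G p (Formula.N (φ.impl (Formula.B s C φ))) := by
  obtain ⟨_, γ, hγ⟩ := h
  intro q _ hq
  exact ⟨hq, γ, hγ⟩
end

section
/- Generalized Joint Responsibility (semantic form): for every game, every play (δ,ω), pairwise disjoint coalitions D₁,…,Dₙ, reals t₁,…,tₙ ≥ 0, and formulas χ₁,…,χₙ: if for each i there exists a play satisfying B^{tᵢ}_{Dᵢ} χᵢ, and (δ,ω) ⊨ χ₁ ∨ … ∨ χₙ, then (δ,ω) ⊨ B^{t₁+…+tₙ}_{D₁∪…∪Dₙ} (χ₁ ∨ … ∨ χₙ). -/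
/-! Each `χᵢ` is blocked by a profile of `Dᵢ` of cost at most `tᵢ`. As the coalitions are disjoint,
these profiles glue into a single profile of `D₁ ∪ ⋯ ∪ Dₙ`, which blocks every `χᵢ` and hence their
disjunction; its cost is at most `t₁ + ⋯ + tₙ` because costs are nonnegative, so that the cost
of a union of coalitions is subadditive. -/

instance Game.nonempty_Δ {A : Type} (G : Game A) : Nonempty G.Δ := ⟨G.d0⟩

section Disjunction

variable {A : Type} (G : Game A) (q : (A → G.Δ) × G.Ω)

theorem sat_or (φ ψ : Formula A) : Sat G q (φ.or ψ) ↔ Sat G q φ ∨ Sat G q ψ := by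
  simp only [Formula.or, Sat]
  tauto

theorem sat_foldl_or (L : List (Formula A)) (φ : Formula A) :
    Sat G q (L.foldl Formula.or φ) ↔ Sat G q φ ∨ ∃ ψ ∈ L, Sat G q ψ := by
  induction L generalizing φ with
  | nil => simp
  | cons ψ L ih => simp only [List.foldl_cons, ih, sat_or, List.exists_mem_cons_iff, or_assoc]

theorem sat_bigOr (L : List (Formula A)) : Sat G q (bigOr L) ↔ ∃ φ ∈ L, Sat G q φ := by
  cases L with
  | nil => simp [bigOr, Formula.fbot, Sat]
  | cons φ L => simp only [bigOr, sat_foldl_or, List.exists_mem_cons_iff]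

end Disjunction

section Coalitions

variable {α : Type*} [DecidableEq α]

theorem Finset.subset_foldr_union_of_mem {L : List (Finset α)} {s : Finset α} (hs : s ∈ L) :
    s ⊆ L.foldr (· ∪ ·) ∅ := by
  induction L with
  | nil => simp at hs
  | cons t L ih =>
    rcases List.mem_cons.mp hs with rfl | hs
    · exact Finset.subset_union_left
    · exact (ih hs).trans Finset.subset_union_right

theorem Finset.sum_foldr_union_le {M : Type*} [AddCommMonoid M] [PartialOrder M]
    [IsOrderedAddMonoid M] {f : α → M} (hf : ∀ a, 0 ≤ f a) (L : List (Finset α)) :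
    ∑ a ∈ L.foldr (· ∪ ·) ∅, f a ≤ (L.map fun s => ∑ a ∈ s, f a).sum := by
  induction L with
  | nil => simp
  | cons s L ih =>
    calc ∑ a ∈ s ∪ L.foldr (· ∪ ·) ∅, f a
        ≤ ∑ a ∈ s, f a + ∑ a ∈ L.foldr (· ∪ ·) ∅, f a := by
          rw [← Finset.sum_union_inter]
          exact le_add_of_nonneg_right (Finset.sum_nonneg fun a _ => hf a)
      _ ≤ _ := by simpa using add_le_add_right ih _

theorem exists_eqOn_of_pairwise_disjoint {ι Δ : Type*} [Nonempty Δ] (D : ι → Finset α)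
    (γ : ι → α → Δ) :
    ∀ l : List ι, l.Pairwise (fun i j => Disjoint (D i) (D j)) →
      ∃ g : α → Δ, ∀ i ∈ l, ∀ a ∈ D i, g a = γ i a
  | [], _ => ⟨Classical.arbitrary _, by simp⟩
  | i :: l, h => by
    obtain ⟨hi, hl⟩ := List.pairwise_cons.mp h
    obtain ⟨g, hg⟩ := exists_eqOn_of_pairwise_disjoint D γ l hl
    refine ⟨fun a => if a ∈ D i then γ i a else g a, ?_⟩
    rintro j (_ | ⟨_, hj⟩) a ha
    · simp [ha]
    · simp [Finset.disjoint_right.mp (hi j hj) ha, hg j hj a ha]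

end Coalitions

theorem generalized_joint_responsibility_valid_general {A : Type} [DecidableEq A]
    (G : Game A) (p : (A → G.Δ) × G.Ω)
    (l : List (ℝ × Finset A × Formula A))
    (hdisj : l.Pairwise fun x y => Disjoint x.2.1 y.2.1)
    (hB : ∀ x ∈ l, ∃ q ∈ G.P, Sat G q (Formula.B x.1 x.2.1 x.2.2))
    (hor : Sat G p (bigOr (l.map fun x => x.2.2))) :
    Sat G p (Formula.B ((l.map fun x => x.1).sum)
      ((l.map fun x => x.2.1).foldr (· ∪ ·) ∅)
      (bigOr (l.map fun x => x.2.2))) := by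
  have hblock : ∀ x ∈ l, ∃ γ : A → G.Δ, ∑ a ∈ x.2.1, G.cost (γ a) ≤ x.1 ∧
      ∀ q ∈ G.P, (∀ a ∈ x.2.1, q.1 a = γ a) → ¬ Sat G q x.2.2 := fun x hx =>
    let ⟨_, _, _, hγ⟩ := hB x hx
    hγ
  choose! γ hγcost hγblock using hblock
  obtain ⟨g, hg⟩ := exists_eqOn_of_pairwise_disjoint (fun x => x.2.1) γ l hdisj
  refine ⟨hor, g, ?_, ?_⟩
  · calc ∑ a ∈ (l.map fun x => x.2.1).foldr (· ∪ ·) ∅, G.cost (g a)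
        ≤ (l.map fun x => ∑ a ∈ x.2.1, G.cost (g a)).sum := by
          simpa [Function.comp_def] using
            Finset.sum_foldr_union_le (fun a => G.cost_nonneg (g a)) (l.map fun x => x.2.1)
      _ = (l.map fun x => ∑ a ∈ x.2.1, G.cost (γ x a)).sum :=
          congrArg List.sum <| List.map_congr_left fun x hx =>
            Finset.sum_congr rfl fun a ha => by rw [hg x hx a ha]
      _ ≤ (l.map fun x => x.1).sum := List.sum_le_sum hγcost
  · intro q hq hqg hsat
    obtain ⟨_, hφ, hqx⟩ := (sat_bigOr G q _).mp hsat
    obtain ⟨x, hx, rfl⟩ := List.mem_map.mp hφ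
    refine hγblock x hx q hq (fun a ha => ?_) hqx
    rw [hqg a (Finset.subset_foldr_union_of_mem (List.mem_map_of_mem hx) ha), hg x hx a ha]

/-- Generalized Joint Responsibility (semantic form): for pairwise
disjoint coalitions `D₁,…,Dₙ`, reals `t₁,…,tₙ ≥ 0` and formulas `χ₁,…,χₙ`
(given as a list `l` of triples), if each `B^{tᵢ}_{Dᵢ} χᵢ` holds at some play
and `(δ,ω) ⊨ χ₁ ∨ ⋯ ∨ χₙ`, then
`(δ,ω) ⊨ B^{t₁+⋯+tₙ}_{D₁∪⋯∪Dₙ}(χ₁ ∨ ⋯ ∨ χₙ)`. -/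
theorem generalized_joint_responsibility_valid {A : Type} [DecidableEq A]
    (G : Game A) (p : (A → G.Δ) × G.Ω) (hp : p ∈ G.P)
    (l : List (ℝ × Finset A × Formula A))
    (ht : ∀ x ∈ l, 0 ≤ x.1)
    (hdisj : l.Pairwise fun x y => Disjoint x.2.1 y.2.1)
    (hB : ∀ x ∈ l, ∃ q ∈ G.P, Sat G q (Formula.B x.1 x.2.1 x.2.2))
    (hor : Sat G p (bigOr (l.map fun x => x.2.2))) :
    Sat G p (Formula.B ((l.map fun x => x.1).sum)
      ((l.map fun x => x.2.1).foldr (· ∪ ·) ∅)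
      (bigOr (l.map fun x => x.2.2))) :=
  generalized_joint_responsibility_valid_general G p l hdisj hB hor
end

section
/- Semantic weakening of blame degree combined with the N-modality: if (δ,ω) ⊨ N(φ → χ₁ ∨ … ∨ χₙ), for each i there is a play satisfying B^{tᵢ}_{Dᵢ} χᵢ with D₁,…,Dₙ ⊆ C pairwise disjoint and t₁+…+tₙ ≤ s, then every play (δ',ω') ∈ P with (δ',ω') ⊨ φ satisfies (δ',ω') ⊨ B^s_C φ. -/
/-- Union of the coalitions in a list. -/
def coalUnion {A : Type} [DecidableEq A] : List (ℝ × Finset A × Formula A) → Finset A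
  | [] => ∅
  | x :: l => x.2.1 ∪ coalUnion l

lemma mem_coalUnion {A : Type} [DecidableEq A] (l : List (ℝ × Finset A × Formula A))
    (a : A) : a ∈ coalUnion l ↔ ∃ x ∈ l, a ∈ x.2.1 := by
  induction l with
  | nil => simp [coalUnion]
  | cons x l ih => simp [coalUnion, ih]

lemma sat_foldl_or_s7 {A : Type} (G : Game A) (q : (A → G.Δ) × G.Ω)
    (l : List (Formula A)) (φ : Formula A)
    (h : Sat G q (l.foldl Formula.or φ)) : Sat G q φ ∨ ∃ χ ∈ l, Sat G q χ := by
  induction l generalizing φ with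
  | nil => exact Or.inl h
  | cons a l ih =>
    rcases ih _ h with h' | ⟨χ, hχ, hs⟩
    · by_cases hφ : Sat G q φ
      · exact Or.inl hφ
      · exact Or.inr ⟨a, by simp, h' hφ⟩
    · exact Or.inr ⟨χ, by simp [hχ], hs⟩

lemma sat_bigOr_s7 {A : Type} (G : Game A) (q : (A → G.Δ) × G.Ω)
    (l : List (Formula A)) (h : Sat G q (bigOr l)) : ∃ χ ∈ l, Sat G q χ := by
  cases l with
  | nil => exact absurd h (by simp [bigOr, Formula.fbot, Sat])
  | cons a l =>
    rcases sat_foldl_or_s7 G q l a h with h' | ⟨χ, hχ, hs⟩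
    · exact ⟨a, by simp, h'⟩
    · exact ⟨χ, by simp [hχ], hs⟩

lemma combined_profile {A : Type} [DecidableEq A] (G : Game A)
    (l : List (ℝ × Finset A × Formula A))
    (hdisj : l.Pairwise fun x y => Disjoint x.2.1 y.2.1)
    (hB : ∀ x ∈ l, ∃ q ∈ G.P, Sat G q (Formula.B x.1 x.2.1 x.2.2)) :
    ∃ γ : A → G.Δ, (∑ a ∈ coalUnion l, G.cost (γ a)) ≤ (l.map fun x => x.1).sum ∧
      ∀ q ∈ G.P, (∀ a ∈ coalUnion l, q.1 a = γ a) → ∀ x ∈ l, ¬ Sat G q x.2.2 := by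
  induction l with
  | nil => exact ⟨fun _ => G.d0, by simp [coalUnion], by simp⟩
  | cons x l ih =>
    rcases List.pairwise_cons.mp hdisj with ⟨hd, hdisj'⟩
    rcases ih hdisj' (fun y hy => hB y (List.mem_cons_of_mem _ hy)) with ⟨γ', hc', hf'⟩
    rcases hB x (by simp) with ⟨q₀, _, _, γx, hcx, hfx⟩
    have hdU : Disjoint x.2.1 (coalUnion l) := by
      rw [Finset.disjoint_right]
      intro a ha hax
      rcases (mem_coalUnion l a).mp ha with ⟨y, hy, hay⟩
      exact (Finset.disjoint_left.mp (hd y hy)) hax hay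
    refine ⟨fun a => if a ∈ x.2.1 then γx a else γ' a, ?_, ?_⟩
    · have : coalUnion (x :: l) = x.2.1 ∪ coalUnion l := rfl
      rw [this, Finset.sum_union hdU]
      have h1 : (∑ a ∈ x.2.1, G.cost (if a ∈ x.2.1 then γx a else γ' a)) =
          ∑ a ∈ x.2.1, G.cost (γx a) := Finset.sum_congr rfl (fun a ha => by simp [ha])
      have h2 : (∑ a ∈ coalUnion l, G.cost (if a ∈ x.2.1 then γx a else γ' a)) =
          ∑ a ∈ coalUnion l, G.cost (γ' a) :=
        Finset.sum_congr rfl (fun a ha => by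
          simp [Finset.disjoint_right.mp hdU ha])
      rw [h1, h2]
      simpa using add_le_add hcx hc'
    · intro q hq hag y hy
      have hagU : ∀ a ∈ coalUnion (x :: l), q.1 a =
          if a ∈ x.2.1 then γx a else γ' a := hag
      rcases List.mem_cons.mp hy with rfl | hy'
      · refine hfx q hq (fun a ha => ?_)
        have := hagU a (by rw [mem_coalUnion]; exact ⟨y, by simp, ha⟩)
        simpa [ha] using this
      · refine hf' q hq (fun a ha => ?_) y hy'
        have := hagU a (by rw [mem_coalUnion]
                           rcases (mem_coalUnion l a).mp ha with ⟨z, hz, haz⟩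
                           exact ⟨z, by simp [hz], haz⟩)
        simpa [Finset.disjoint_right.mp hdU ha] using this

/-- Semantic counterpart of Lemma "five plus plus": if
`(δ,ω) ⊨ N(φ → χ₁ ∨ ⋯ ∨ χₙ)`, for each `i` some play satisfies
`B^{tᵢ}_{Dᵢ} χᵢ`, where `D₁,…,Dₙ ⊆ C` are pairwise disjoint and
`t₁+⋯+tₙ ≤ s`, then every play `(δ',ω') ∈ P` satisfying `φ` satisfies
`B^s_C φ`. -/
theorem five_plus_plus_semantic {A : Type} [DecidableEq A]
    (G : Game A) (p : (A → G.Δ) × G.Ω) (hp : p ∈ G.P)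
    (C : Finset A) (s : ℝ) (φ : Formula A)
    (l : List (ℝ × Finset A × Formula A))
    (ht : ∀ x ∈ l, 0 ≤ x.1)
    (hsub : ∀ x ∈ l, x.2.1 ⊆ C)
    (hdisj : l.Pairwise fun x y => Disjoint x.2.1 y.2.1)
    (hsum : (l.map fun x => x.1).sum ≤ s)
    (hB : ∀ x ∈ l, ∃ q ∈ G.P, Sat G q (Formula.B x.1 x.2.1 x.2.2))
    (hN : Sat G p (Formula.N (φ.impl (bigOr (l.map fun x => x.2.2))))) :
    ∀ q ∈ G.P, Sat G q φ → Sat G q (Formula.B s C φ) := by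
  intro q hq hqφ
  rcases combined_profile G l hdisj hB with ⟨γ, hc, hf⟩
  have hUC : coalUnion l ⊆ C := by
    intro a ha
    rcases (mem_coalUnion l a).mp ha with ⟨x, hx, hax⟩
    exact hsub x hx hax
  classical
  refine ⟨hqφ, fun a => if a ∈ coalUnion l then γ a else G.d0, ?_, ?_⟩
  · calc (∑ a ∈ C, G.cost (if a ∈ coalUnion l then γ a else G.d0))
        = ∑ a ∈ coalUnion l, G.cost (if a ∈ coalUnion l then γ a else G.d0) := by
          refine (Finset.sum_subset hUC (fun a _ ha => ?_)).symm
          simp [ha, G.cost_d0]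
      _ = ∑ a ∈ coalUnion l, G.cost (γ a) :=
          Finset.sum_congr rfl (fun a ha => by simp [ha])
      _ ≤ (l.map fun x => x.1).sum := hc
      _ ≤ s := hsum
  · intro r hr hag hrφ
    have hbig : Sat G r (bigOr (l.map fun x => x.2.2)) := hN r hr hrφ
    rcases sat_bigOr_s7 G r _ hbig with ⟨χ, hχ, hs'⟩
    rcases List.mem_map.mp hχ with ⟨x, hx, rfl⟩
    refine hf r hr (fun a ha => ?_) x hx hs'
    have := hag a (hUC ha)
    simpa [ha] using this
end

section
/- In the canonical game built from a maximal consistent set ω₀, for every play (δ,ω) ∈ P, every action profile γ ∈ Δ^C with ‖γ‖ ≤ s, and every formula ¬(φ → B^s_C φ) ∈ ω, there exists a play (δ',ω') ∈ P such that δ' agrees with γ on C and φ ∈ ω'. -/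
/-- A formula is a propositional tautology if it evaluates to true under every
Boolean valuation of formulas that respects negation and implication. -/
def Tautology {A : Type} (φ : Formula A) : Prop :=
  ∀ v : Formula A → Bool,
    (∀ ψ : Formula A, v ψ.neg = !(v ψ)) →
    (∀ ψ χ : Formula A, v (ψ.impl χ) = (!(v ψ) || v χ)) →
    v φ = true

/-- Theorems of the logic of blameworthiness with sacrifice: propositional
tautologies, the Truth, Distributivity, Negative Introspection, None to Blame,
Monotonicity, Joint Responsibility, Blame for Cause, and Fairness axioms,
closed under Modus Ponens and Necessitation. -/
inductive Prov {A : Type} [DecidableEq A] : Formula A → Prop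
  | taut {φ : Formula A} : Tautology φ → Prov φ
  | truthN {φ : Formula A} : Prov ((Formula.N φ).impl φ)
  | truthB {s : ℝ} {C : Finset A} {φ : Formula A} (hs : 0 ≤ s) :
      Prov ((Formula.B s C φ).impl φ)
  | distr {φ ψ : Formula A} :
      Prov ((Formula.N (φ.impl ψ)).impl ((Formula.N φ).impl (Formula.N ψ)))
  | negIntro {φ : Formula A} :
      Prov (((Formula.N φ).neg).impl (Formula.N ((Formula.N φ).neg)))
  | noneToBlame {s : ℝ} {φ : Formula A} (hs : 0 ≤ s) :
      Prov ((Formula.B s (∅ : Finset A) φ).neg)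
  | mono {s t : ℝ} {C D : Finset A} {φ : Formula A}
      (hs : 0 ≤ s) (hst : s ≤ t) (hCD : C ⊆ D) :
      Prov ((Formula.B s C φ).impl (Formula.B t D φ))
  | joint {s t : ℝ} {C D : Finset A} {φ ψ : Formula A}
      (hs : 0 ≤ s) (ht : 0 ≤ t) (hCD : Disjoint C D) :
      Prov (((Formula.B s C φ).nbar.and (Formula.B t D ψ).nbar).impl
        ((φ.or ψ).impl (Formula.B (s + t) (C ∪ D) (φ.or ψ))))
  | cause {s : ℝ} {C : Finset A} {φ ψ : Formula A} (hs : 0 ≤ s) :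
      Prov ((Formula.N (φ.impl ψ)).impl
        ((Formula.B s C ψ).impl (φ.impl (Formula.B s C φ))))
  | fair {s : ℝ} {C : Finset A} {φ : Formula A} (hs : 0 ≤ s) :
      Prov ((Formula.B s C φ).impl (Formula.N (φ.impl (Formula.B s C φ))))
  | mp {φ ψ : Formula A} : Prov (φ.impl ψ) → Prov φ → Prov ψ
  | nec {φ : Formula A} : Prov φ → Prov (Formula.N φ)

/-- Derivability `X ⊢ φ` from a set of hypotheses: hypotheses and theorems of
the logic, closed under Modus Ponens. -/
inductive Derives {A : Type} [DecidableEq A] (X : Set (Formula A)) : Formula A → Prop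
  | hyp {φ : Formula A} : φ ∈ X → Derives X φ
  | thm {φ : Formula A} : Prov φ → Derives X φ
  | mp {φ ψ : Formula A} : Derives X (φ.impl ψ) → Derives X φ → Derives X ψ

/-- A set of formulas is consistent if it cannot derive both a formula and its
negation. -/
def Consistent {A : Type} [DecidableEq A] (X : Set (Formula A)) : Prop :=
  ∀ φ : Formula A, ¬ (Derives X φ ∧ Derives X φ.neg)

/-- Maximal consistent sets of formulas. -/
def MCS {A : Type} [DecidableEq A] (X : Set (Formula A)) : Prop :=
  Consistent X ∧ ∀ φ : Formula A, φ ∈ X ∨ φ.neg ∈ X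

/-- Actions of the canonical game: the zero-cost action `d₀` (`none`) together
with all triples `(φ, C, s)` where `C` is a nonempty coalition and `s ≥ 0`. -/
def CanAct (A : Type) : Type :=
  Option {x : Formula A × Finset A × ℝ // x.2.1.Nonempty ∧ 0 ≤ x.2.2}

/-- Outcomes of the canonical game for `ω₀`: maximal consistent sets `ω` such
that `ψ ∈ ω` whenever `N ψ ∈ ω₀`. -/
def CanOutcome {A : Type} [DecidableEq A] (ω₀ : Set (Formula A)) : Type :=
  {ω : Set (Formula A) // MCS ω ∧ ∀ φ : Formula A, Formula.N φ ∈ ω₀ → φ ∈ ω}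

/-- Plays of the canonical game for `ω₀`: pairs `(δ, ω)` such that for every
formula `¬N¬B^s_C ψ ∈ ω₀`, if every member of `C` votes `(ψ, C, s)`, then
`¬ψ ∈ ω`. -/
def canonicalP {A : Type} [DecidableEq A] (ω₀ : Set (Formula A)) :
    Set ((A → CanAct A) × CanOutcome ω₀) :=
  {p | ∀ (ψ : Formula A) (C : Finset A) (s : ℝ) (h : C.Nonempty ∧ 0 ≤ s),
        (Formula.B s C ψ).nbar ∈ ω₀ →
        (∀ a ∈ C, p.1 a = some ⟨(ψ, C, s), h⟩) → ψ.neg ∈ p.2.1}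

/-- The canonical game `G(ω₀)` for a maximal consistent set `ω₀`.  The cost of
`d₀` is `0` and the cost of a triple `(φ, C, s)` is `s / |C|`. -/
noncomputable def canonicalGame {A : Type} [DecidableEq A] (ω₀ : Set (Formula A)) : Game A where
  Δ := CanAct A
  Ω := CanOutcome ω₀
  cost := fun d => match d with
    | none => 0
    | some x => x.1.2.2 / x.1.2.1.card
  cost_nonneg := by
    rintro (_ | x)
    · exact le_refl 0
    · exact div_nonneg x.2.2 (Nat.cast_nonneg _)
  d0 := none
  cost_d0 := rfl
  P := canonicalP ω₀
  π := fun n => {p ∈ canonicalP ω₀ | Formula.var n ∈ p.2.1}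

/-!
If the set `{φ} ∪ {ψ : Nψ ∈ ω₀} ∪ {¬χ : …}` were inconsistent, finitely many votes `(χᵢ, Dᵢ, tᵢ)`
of `γ` would give `N(φ → ⋁ χᵢ) ∈ ω`; their coalitions are pairwise disjoint because `γ` is a
function. Joint Responsibility combines the `N̄ B^{tᵢ}_{Dᵢ} χᵢ ∈ ω₀` into
`N̄ B^{Σ tᵢ}_{⋃ Dᵢ} ⋁ χᵢ`; Fairness and Negative Introspection turn it into
`B^{Σ tᵢ}_{⋃ Dᵢ} ⋁ χᵢ ∈ ω`, Blame for Cause into `B^{Σ tᵢ}_{⋃ Dᵢ} φ ∈ ω`, and Monotonicity into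
`B^s_C φ ∈ ω`, since `Σ tᵢ` is the cost of `γ` on `⋃ Dᵢ ⊆ C`. This contradicts
`¬(φ → B^s_C φ) ∈ ω`. A maximal consistent extension of the set, played with `γ` on `C` and `d₀`
elsewhere, is the required play.
-/

namespace Prov

variable {A : Type} [DecidableEq A] {φ ψ χ : Formula A}

theorem imp_self : Prov (φ.impl φ) :=
  taut fun v _ hi => by simp only [hi]; cases v φ <;> rfl

theorem imp_intro : Prov (ψ.impl (φ.impl ψ)) :=
  taut fun v _ hi => by simp only [hi]; cases v φ <;> cases v ψ <;> rfl

theorem imp_distrib : Prov ((φ.impl (ψ.impl χ)).impl ((φ.impl ψ).impl (φ.impl χ))) :=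
  taut fun v _ hi => by simp only [hi]; cases v φ <;> cases v ψ <;> cases v χ <;> rfl

theorem syllogism : Prov ((φ.impl ψ).impl ((ψ.impl χ).impl (φ.impl χ))) :=
  taut fun v _ hi => by simp only [hi]; cases v φ <;> cases v ψ <;> cases v χ <;> rfl

theorem mt : Prov ((φ.impl ψ).impl (ψ.neg.impl φ.neg)) :=
  taut fun v hn hi => by simp only [hi, hn]; cases v φ <;> cases v ψ <;> rfl

theorem not_imp_comm : Prov ((φ.neg.impl ψ).impl (ψ.neg.impl φ)) :=
  taut fun v hn hi => by simp only [hi, hn]; cases v φ <;> cases v ψ <;> rfl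

theorem of_not_not : Prov (φ.neg.neg.impl φ) :=
  taut fun v hn hi => by simp only [hi, hn]; cases v φ <;> rfl

theorem not_of_imp_of_imp_not : Prov ((φ.impl ψ).impl ((φ.impl ψ.neg).impl φ.neg)) :=
  taut fun v hn hi => by simp only [hi, hn]; cases v φ <;> cases v ψ <;> rfl

theorem and_intro : Prov (φ.impl (ψ.impl (φ.and ψ))) :=
  taut fun v hn hi => by simp only [Formula.and, hi, hn]; cases v φ <;> cases v ψ <;> rfl

theorem or_inl : Prov (φ.impl (φ.or ψ)) :=
  taut fun v hn hi => by simp only [Formula.or, hi, hn]; cases v φ <;> cases v ψ <;> rfl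

theorem or_inr : Prov (ψ.impl (φ.or ψ)) := imp_intro

theorem of_not_imp : Prov ((φ.impl ψ).neg.impl φ) :=
  taut fun v hn hi => by simp only [hi, hn]; cases v φ <;> cases v ψ <;> rfl

theorem not_of_not_imp : Prov ((φ.impl ψ).neg.impl ψ.neg) :=
  taut fun v hn hi => by simp only [hi, hn]; cases v φ <;> cases v ψ <;> rfl

theorem imp_trans (h₁ : Prov (φ.impl ψ)) (h₂ : Prov (ψ.impl χ)) : Prov (φ.impl χ) :=
  mp (mp syllogism h₁) h₂

theorem nbar_N_imp_N : Prov ((Formula.N φ).nbar.impl (Formula.N φ)) :=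
  mp not_imp_comm negIntro

end Prov

namespace Derives

variable {A : Type} [DecidableEq A] {X Y : Set (Formula A)} {φ ψ : Formula A}

theorem mono (hXY : X ⊆ Y) (h : Derives X φ) : Derives Y φ := by
  induction h with
  | hyp h => exact hyp (hXY h)
  | thm h => exact thm h
  | mp _ _ ih₁ ih₂ => exact mp ih₁ ih₂

theorem trans (hY : ∀ ψ ∈ Y, Derives X ψ) (h : Derives Y φ) : Derives X φ := by
  induction h with
  | hyp h => exact hY _ h
  | thm h => exact thm h
  | mp _ _ ih₁ ih₂ => exact mp ih₁ ih₂

theorem N_image (h : Derives Y φ) : Derives (Formula.N '' Y) (Formula.N φ) := by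
  induction h with
  | hyp h => exact hyp (Set.mem_image_of_mem _ h)
  | thm h => exact thm (Prov.nec h)
  | mp _ _ ih₁ ih₂ => exact mp (mp (thm Prov.distr) ih₁) ih₂

theorem deduction (h : Derives (insert φ X) ψ) : Derives X (φ.impl ψ) := by
  induction h with
  | hyp h =>
    rcases h with rfl | h
    · exact thm Prov.imp_self
    · exact mp (thm Prov.imp_intro) (hyp h)
  | thm h => exact mp (thm Prov.imp_intro) (thm h)
  | mp _ _ ih₁ ih₂ => exact mp (mp (thm Prov.imp_distrib) ih₁) ih₂

theorem exists_mem_of_sUnion {c : Set (Set (Formula A))} (hc : DirectedOn (· ⊆ ·) c)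
    (hne : c.Nonempty) (h : Derives (⋃₀ c) φ) : ∃ X ∈ c, Derives X φ := by
  induction h with
  | hyp h =>
    obtain ⟨X, hX, hφ⟩ := h
    exact ⟨X, hX, hyp hφ⟩
  | thm h => exact ⟨hne.some, hne.some_mem, thm h⟩
  | mp _ _ ih₁ ih₂ =>
    obtain ⟨X₁, hX₁, h₁⟩ := ih₁
    obtain ⟨X₂, hX₂, h₂⟩ := ih₂
    obtain ⟨X, hX, h₁X, h₂X⟩ := hc X₁ hX₁ X₂ hX₂
    exact ⟨X, hX, mp (h₁.mono h₁X) (h₂.mono h₂X)⟩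

end Derives

section Consistency

variable {A : Type} [DecidableEq A] {X Y : Set (Formula A)} {φ : Formula A}

theorem Consistent.of_forall_derives (hX : Consistent X) (hY : ∀ ψ ∈ Y, Derives X ψ) :
    Consistent Y :=
  fun ψ h => hX ψ ⟨h.1.trans hY, h.2.trans hY⟩

theorem derives_neg_of_not_consistent_insert (h : ¬ Consistent (insert φ X)) :
    Derives X φ.neg := by
  obtain ⟨ψ, hψ, hnψ⟩ := not_forall_not.mp h
  exact .mp (.mp (.thm Prov.not_of_imp_of_imp_not) hψ.deduction) hnψ.deduction

theorem consistent_sUnion {c : Set (Set (Formula A))} (hc : ∀ X ∈ c, Consistent X)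
    (hchain : IsChain (· ⊆ ·) c) (hne : c.Nonempty) : Consistent (⋃₀ c) := by
  rintro ψ ⟨hψ, hnψ⟩
  obtain ⟨X₁, hX₁, h₁⟩ := hψ.exists_mem_of_sUnion hchain.directedOn hne
  obtain ⟨X₂, hX₂, h₂⟩ := hnψ.exists_mem_of_sUnion hchain.directedOn hne
  obtain ⟨X, hX, h₁X, h₂X⟩ := hchain.directedOn X₁ hX₁ X₂ hX₂
  exact hc X hX ψ ⟨h₁.mono h₁X, h₂.mono h₂X⟩

theorem exists_MCS_superset (hX : Consistent X) : ∃ M, X ⊆ M ∧ MCS M := by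
  obtain ⟨M, hXM, hM⟩ := zorn_subset_nonempty {Y | Consistent Y}
    (fun c hc hchain hne => ⟨⋃₀ c, consistent_sUnion hc hchain hne,
      fun _ => Set.subset_sUnion_of_mem⟩) X hX
  have hneg : ∀ ψ ∉ M, Derives M ψ.neg := fun ψ hψ =>
    derives_neg_of_not_consistent_insert fun hc => hψ (hM.mem_of_prop_insert hc)
  refine ⟨M, hXM, hM.prop, fun ψ => ?_⟩
  by_contra! h
  exact hM.prop ψ.neg ⟨hneg ψ h.1, hneg ψ.neg h.2⟩

end Consistency

namespace MCS

variable {A : Type} [DecidableEq A] {Γ : Set (Formula A)} {φ ψ : Formula A}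

theorem mem_of_derives (hΓ : MCS Γ) (h : Derives Γ φ) : φ ∈ Γ :=
  (hΓ.2 φ).resolve_right fun hn => hΓ.1 φ ⟨h, .hyp hn⟩

theorem mem_of_prov (hΓ : MCS Γ) (h : Prov φ) : φ ∈ Γ :=
  hΓ.mem_of_derives (.thm h)

theorem mp (hΓ : MCS Γ) (himp : φ.impl ψ ∈ Γ) (h : φ ∈ Γ) : ψ ∈ Γ :=
  hΓ.mem_of_derives (.mp (.hyp himp) (.hyp h))

theorem neg_mem_iff (hΓ : MCS Γ) : φ.neg ∈ Γ ↔ φ ∉ Γ :=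
  ⟨fun hn h => hΓ.1 φ ⟨.hyp h, .hyp hn⟩, (hΓ.2 φ).resolve_left⟩

theorem mem_and_not_mem_of_neg_impl_mem (hΓ : MCS Γ) (h : (φ.impl ψ).neg ∈ Γ) :
    φ ∈ Γ ∧ ψ ∉ Γ :=
  ⟨hΓ.mp (hΓ.mem_of_prov Prov.of_not_imp) h,
    hΓ.neg_mem_iff.mp (hΓ.mp (hΓ.mem_of_prov Prov.not_of_not_imp) h)⟩

theorem N_mp (hΓ : MCS Γ) (himp : Formula.N (φ.impl ψ) ∈ Γ) (h : Formula.N φ ∈ Γ) :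
    Formula.N ψ ∈ Γ :=
  hΓ.mp (hΓ.mp (hΓ.mem_of_prov Prov.distr) himp) h

theorem mem_of_N_mem (hΓ : MCS Γ) (h : Formula.N φ ∈ Γ) : φ ∈ Γ :=
  hΓ.mp (hΓ.mem_of_prov Prov.truthN) h

theorem N_nbar_mem (hΓ : MCS Γ) (h : φ.nbar ∈ Γ) : Formula.N φ.nbar ∈ Γ :=
  hΓ.mp (hΓ.mem_of_prov Prov.negIntro) h

theorem nbar_mem_of_mem (hΓ : MCS Γ) (h : φ ∈ Γ) : φ.nbar ∈ Γ :=
  hΓ.neg_mem_iff.mpr fun hN => hΓ.neg_mem_iff.mp (hΓ.mem_of_N_mem hN) h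

theorem nbar_mono (hΓ : MCS Γ) (himp : Formula.N (φ.impl ψ) ∈ Γ) (h : φ.nbar ∈ Γ) :
    ψ.nbar ∈ Γ :=
  hΓ.neg_mem_iff.mpr fun hN => hΓ.neg_mem_iff.mp h <|
    hΓ.N_mp (hΓ.N_mp (hΓ.mem_of_prov (.nec Prov.mt)) himp) hN

theorem N_N_mem (hΓ : MCS Γ) (h : Formula.N φ ∈ Γ) : Formula.N (Formula.N φ) ∈ Γ :=
  hΓ.N_mp (hΓ.mem_of_prov (.nec Prov.nbar_N_imp_N)) (hΓ.N_nbar_mem (hΓ.nbar_mem_of_mem h))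

end MCS

namespace MCS

variable {A : Type} [DecidableEq A] {Γ : Set (Formula A)}

theorem nbar_B_or_mem (hΓ : MCS Γ) {s t : ℝ} {C D : Finset A}
    (hs : 0 ≤ s) (ht : 0 ≤ t) (hCD : Disjoint C D)
    (hφ : (Formula.B s C φ).nbar ∈ Γ) (hψ : (Formula.B t D ψ).nbar ∈ Γ) :
    (Formula.B (s + t) (C ∪ D) (φ.or ψ)).nbar ∈ Γ := by
  have hboth : Formula.N ((Formula.B s C φ).nbar.and (Formula.B t D ψ).nbar) ∈ Γ :=
    hΓ.N_mp (hΓ.N_mp (hΓ.mem_of_prov (.nec Prov.and_intro)) (hΓ.N_nbar_mem hφ))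
      (hΓ.N_nbar_mem hψ)
  have hjoint : Formula.N ((φ.or ψ).impl (Formula.B (s + t) (C ∪ D) (φ.or ψ))) ∈ Γ :=
    hΓ.N_mp (hΓ.mem_of_prov (.nec (.joint hs ht hCD))) hboth
  have hor : (φ.or ψ).nbar ∈ Γ :=
    hΓ.nbar_mono (hΓ.mem_of_prov (.nec (Prov.imp_trans (.truthB hs) Prov.or_inl))) hφ
  exact hΓ.nbar_mono hjoint hor

/-- `Φ` is the disjunction of the `χ i`; all that is needed of it is that each `χ i` implies it. -/
theorem exists_nbar_B_biUnion (hΓ : MCS Γ) {ι : Type} {S : Finset ι} (hS : S.Nonempty)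
    (χ : ι → Formula A) (D : ι → Finset A) (t : ι → ℝ) (ht : ∀ i ∈ S, 0 ≤ t i)
    (hD : (S : Set ι).PairwiseDisjoint D) (hχ : ∀ i ∈ S, (Formula.B (t i) (D i) (χ i)).nbar ∈ Γ) :
    ∃ Φ, (∀ i ∈ S, Prov ((χ i).impl Φ)) ∧
      (Formula.B (∑ i ∈ S, t i) (S.biUnion D) Φ).nbar ∈ Γ := by
  classical
  induction hS using Finset.Nonempty.cons_induction with
  | singleton i =>
    exact ⟨χ i, by simpa using Prov.imp_self, by simpa using hχ i (Finset.mem_singleton_self i)⟩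
  | cons i S hi hS ih =>
    simp only [Finset.mem_cons, forall_eq_or_imp] at ht hχ
    obtain ⟨Φ, hΦ, hnbΦ⟩ := ih ht.2 (hD.subset (by simp)) hχ.2
    have hdisj : Disjoint (D i) (S.biUnion D) :=
      (Finset.disjoint_biUnion_right _ _ _).mpr fun j hj =>
        hD (by simp) (by simp [hj]) (ne_of_mem_of_not_mem hj hi).symm
    refine ⟨(χ i).or Φ, ?_, ?_⟩
    · simpa only [Finset.mem_cons, forall_eq_or_imp] using
        ⟨Prov.or_inl, fun j hj => Prov.imp_trans (hΦ j hj) Prov.or_inr⟩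
    · rw [Finset.sum_cons, Finset.cons_eq_insert, Finset.biUnion_insert]
      exact hΓ.nbar_B_or_mem ht.1 (Finset.sum_nonneg ht.2) hdisj hχ.1 hnbΦ

theorem B_mem_of_nbar_B_mem (hΓ : MCS Γ) {t : ℝ} {D : Finset A} {Φ : Formula A}
    (ht : 0 ≤ t) (hφΦ : Formula.N (φ.impl Φ) ∈ Γ) (hnb : (Formula.B t D Φ).nbar ∈ Γ)
    (hφ : φ ∈ Γ) : Formula.B t D φ ∈ Γ := by
  have hfair : Formula.N (Φ.impl (Formula.B t D Φ)) ∈ Γ :=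
    hΓ.mp (hΓ.mem_of_prov Prov.nbar_N_imp_N)
      (hΓ.nbar_mono (hΓ.mem_of_prov (.nec (.fair ht))) hnb)
  have hΦ : Φ ∈ Γ := hΓ.mp (hΓ.mem_of_N_mem hφΦ) hφ
  have hBΦ : Formula.B t D Φ ∈ Γ := hΓ.mp (hΓ.mem_of_N_mem hfair) hΦ
  exact hΓ.mp (hΓ.mp (hΓ.mp (hΓ.mem_of_prov (.cause ht)) hφΦ) hBΦ) hφ

end MCS

abbrev CanVote (A : Type) : Type :=
  {x : Formula A × Finset A × ℝ // x.2.1.Nonempty ∧ 0 ≤ x.2.2}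

namespace CanVote

variable {A : Type}

def formula (x : CanVote A) : Formula A := x.1.1

def coalition (x : CanVote A) : Finset A := x.1.2.1

def degree (x : CanVote A) : ℝ := x.1.2.2

theorem pairwiseDisjoint_coalition {γ : A → CanAct A} {T : Set (CanVote A)}
    (hT : ∀ x ∈ T, ∀ a ∈ x.coalition, γ a = some x) : T.PairwiseDisjoint coalition :=
  fun x hx y hy hxy => Finset.disjoint_left.mpr fun a hax hay =>
    hxy (Option.some_injective _ ((hT x hx a hax).symm.trans (hT y hy a hay)))

variable [DecidableEq A] (ω₀ : Set (Formula A))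

theorem sum_cost_coalition {γ : A → (canonicalGame ω₀).Δ} {x : CanVote A}
    (hx : ∀ a ∈ x.coalition, γ a = some x) :
    ∑ a ∈ x.coalition, (canonicalGame ω₀).cost (γ a) = x.degree := by
  have hcard : (x.coalition.card : ℝ) ≠ 0 := Nat.cast_ne_zero.mpr x.2.1.card_pos.ne'
  calc ∑ a ∈ x.coalition, (canonicalGame ω₀).cost (γ a)
      = ∑ _a ∈ x.coalition, x.degree / x.coalition.card :=
        Finset.sum_congr rfl fun a ha => by rw [hx a ha]; rfl
    _ = x.degree := by rw [Finset.sum_const, nsmul_eq_mul, mul_div_cancel₀ _ hcard]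

theorem sum_degree_le {γ : A → (canonicalGame ω₀).Δ} {C : Finset A} {S : Finset (CanVote A)}
    (hC : ∀ x ∈ S, x.coalition ⊆ C) (hγ : ∀ x ∈ S, ∀ a ∈ x.coalition, γ a = some x) :
    ∑ x ∈ S, x.degree ≤ ∑ a ∈ C, (canonicalGame ω₀).cost (γ a) :=
  calc ∑ x ∈ S, x.degree
      = ∑ x ∈ S, ∑ a ∈ x.coalition, (canonicalGame ω₀).cost (γ a) :=
        Finset.sum_congr rfl fun x hx => (sum_cost_coalition ω₀ (hγ x hx)).symm
    _ = ∑ a ∈ S.biUnion coalition, (canonicalGame ω₀).cost (γ a) :=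
        (Finset.sum_biUnion (pairwiseDisjoint_coalition hγ)).symm
    _ ≤ ∑ a ∈ C, (canonicalGame ω₀).cost (γ a) :=
        Finset.sum_le_sum_of_subset_of_nonneg (Finset.biUnion_subset.mpr hC)
          fun _ _ _ => (canonicalGame ω₀).cost_nonneg _

end CanVote

namespace CanOutcome

variable {A : Type} [DecidableEq A] {ω₀ : Set (Formula A)}

theorem N_mem_of_derives (hω₀ : MCS ω₀) (ω : CanOutcome ω₀) {θ : Formula A}
    (h : Derives {ψ | Formula.N ψ ∈ ω₀} θ) : Formula.N θ ∈ ω.1 :=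
  ω.2.2 _ <| hω₀.N_N_mem <| hω₀.mem_of_derives <| h.N_image.mono <| by
    rintro _ ⟨ψ, hψ, rfl⟩
    exact hψ

theorem nbar_mem (hω₀ : MCS ω₀) (ω : CanOutcome ω₀) {φ : Formula A} (h : φ.nbar ∈ ω₀) :
    φ.nbar ∈ ω.1 :=
  ω.2.2 _ (hω₀.N_nbar_mem h)

end CanOutcome

section Witness

variable {A : Type} [DecidableEq A] (ω₀ : Set (Formula A)) (C : Finset A)
  (γ : A → (canonicalGame ω₀).Δ)

def blameVotes : Set (CanVote A) :=
  {x | x.coalition ⊆ C ∧ (∀ a ∈ x.coalition, γ a = some x) ∧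
    (Formula.B x.degree x.coalition x.formula).nbar ∈ ω₀}

def witnessSet (φ : Formula A) : Set (Formula A) :=
  insert φ {ψ | Formula.N ψ ∈ ω₀} ∪ (fun x => x.formula.neg) '' blameVotes ω₀ C γ

theorem finite_blameVotes : (blameVotes ω₀ C γ).Finite :=
  ((C.finite_toSet.image γ).preimage (Option.some_injective _).injOn).subset
    fun x hx => by
      obtain ⟨a, ha⟩ := x.2.1
      exact ⟨a, hx.1 ha, hx.2.1 a ha⟩

variable {ω₀ C γ}

theorem consistent_witnessSet (hω₀ : MCS ω₀) (ω : CanOutcome ω₀) {s : ℝ} {φ : Formula A}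
    (hγ : ∑ a ∈ C, (canonicalGame ω₀).cost (γ a) ≤ s)
    (hφ : φ ∈ ω.1) (hB : Formula.B s C φ ∉ ω.1) : Consistent (witnessSet ω₀ C γ φ) := by
  obtain ⟨S, hS⟩ := (finite_blameVotes ω₀ C γ).exists_finset_coe
  have hSvotes (x) (hx : x ∈ S) : x ∈ blameVotes ω₀ C γ := hS ▸ Finset.mem_coe.mpr hx
  rcases S.eq_empty_or_nonempty with rfl | hne
  · rw [witnessSet, ← hS, Finset.coe_empty, Set.image_empty, Set.union_empty]
    by_contra hincons
    have hnφ := derives_neg_of_not_consistent_insert hincons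
    exact ω.2.1.neg_mem_iff.mp (ω.2.1.mem_of_derives (hnφ.mono ω.2.2)) hφ
  obtain ⟨Φ, hχΦ, hnbΦ⟩ := hω₀.exists_nbar_B_biUnion hne CanVote.formula CanVote.coalition
    CanVote.degree (fun x _ => x.2.2)
    (CanVote.pairwiseDisjoint_coalition fun x hx => (hSvotes x hx).2.1)
    (fun x hx => (hSvotes x hx).2.2)
  have hT : 0 ≤ ∑ x ∈ S, x.degree := Finset.sum_nonneg fun x _ => x.2.2
  by_contra hincons
  have hΦ : Derives (insert φ {ψ | Formula.N ψ ∈ ω₀}) Φ := by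
    -- every `¬χ` of the witness set follows from `¬Φ`
    refine .mp (.thm Prov.of_not_not) (derives_neg_of_not_consistent_insert fun hc => ?_)
    refine hincons (hc.of_forall_derives ?_)
    rintro ψ (hψ | ⟨x, hx, rfl⟩)
    · exact .hyp (Set.mem_insert_of_mem _ hψ)
    · rw [← hS, Finset.mem_coe] at hx
      exact .mp (.mp (.thm Prov.mt) (.thm (hχΦ x hx))) (.hyp (Set.mem_insert _ _))
  have hBφ := ω.2.1.B_mem_of_nbar_B_mem hT (ω.N_mem_of_derives hω₀ hΦ.deduction)
    (ω.nbar_mem hω₀ hnbΦ) hφ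
  refine hB (ω.2.1.mp (ω.2.1.mem_of_prov (.mono hT ?_ ?_)) hBφ)
  · exact (CanVote.sum_degree_le ω₀ (fun x hx => (hSvotes x hx).1)
      (fun x hx => (hSvotes x hx).2.1)).trans hγ
  · exact Finset.biUnion_subset.mpr fun x hx => (hSvotes x hx).1

theorem mem_canonicalP_of_witnessSet_subset {φ : Formula A} (ω : CanOutcome ω₀)
    (hω : witnessSet ω₀ C γ φ ⊆ ω.1) :
    ((fun a => if a ∈ C then γ a else none), ω) ∈ canonicalP ω₀ := by
  intro ψ D t hD hnb hvote
  have hDC : D ⊆ C := fun a ha => by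
    by_contra haC
    simpa [haC] using hvote a ha
  exact hω (Or.inr ⟨⟨(ψ, D, t), hD⟩,
    ⟨hDC, fun a ha => (if_pos (hDC ha)).symm.trans (hvote a ha), hnb⟩, rfl⟩)

end Witness

theorem canonical_B_witness_exists_general {A : Type} [DecidableEq A]
    (ω₀ : Set (Formula A)) (hω₀ : MCS ω₀)
    (p : (A → (canonicalGame ω₀).Δ) × (canonicalGame ω₀).Ω)
    (C : Finset A) (s : ℝ) (φ : Formula A)
    (γ : A → (canonicalGame ω₀).Δ)
    (hγ : (∑ a ∈ C, (canonicalGame ω₀).cost (γ a)) ≤ s)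
    (hmem : (φ.impl (Formula.B s C φ)).neg ∈ p.2.1) :
    ∃ q ∈ (canonicalGame ω₀).P, (∀ a ∈ C, q.1 a = γ a) ∧ φ ∈ q.2.1 := by
  obtain ⟨hφ, hB⟩ := p.2.2.1.mem_and_not_mem_of_neg_impl_mem hmem
  obtain ⟨ω', hsub, hω'⟩ := exists_MCS_superset (consistent_witnessSet hω₀ p.2 hγ hφ hB)
  let ω : CanOutcome ω₀ := ⟨ω', hω', fun ψ hψ => hsub (.inl (Set.mem_insert_of_mem φ hψ))⟩
  exact ⟨_, mem_canonicalP_of_witnessSet_subset ω hsub, fun a ha => if_pos ha,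
    hsub (.inl (Set.mem_insert φ _))⟩

/-- In the canonical game for a maximal consistent set `ω₀`, for
every play `(δ,ω) ∈ P`, every action profile `γ` with `‖γ‖ ≤ s` on `C`, and
every formula `¬(φ → B^s_C φ) ∈ ω`, there is a play `(δ',ω') ∈ P` agreeing
with `γ` on `C` such that `φ ∈ ω'`. -/
theorem canonical_B_witness_exists {A : Type} [DecidableEq A]
    (ω₀ : Set (Formula A)) (hω₀ : MCS ω₀)
    (p : (A → (canonicalGame ω₀).Δ) × (canonicalGame ω₀).Ω)
    (hp : p ∈ (canonicalGame ω₀).P)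
    (C : Finset A) (s : ℝ) (hs : 0 ≤ s) (φ : Formula A)
    (γ : A → (canonicalGame ω₀).Δ)
    (hγ : (∑ a ∈ C, (canonicalGame ω₀).cost (γ a)) ≤ s)
    (hmem : (φ.impl (Formula.B s C φ)).neg ∈ p.2.1) :
    ∃ q ∈ (canonicalGame ω₀).P, (∀ a ∈ C, q.1 a = γ a) ∧ φ ∈ q.2.1 :=
  canonical_B_witness_exists_general ω₀ hω₀ p C s φ γ hγ hmem
end

section
/- Soundness: every formula provable in the logic of blameworthiness with sacrifice is satisfied at every play of every game. -/
/-!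
Every axiom is valid at every play of every game, and Modus Ponens and Necessitation preserve
validity. Besides the truth of `φ`, blameworthiness `B s C φ` only says that `C` can prevent `φ`
within budget `s`, and this ability is inherited by larger coalitions and budgets, combines over
disjoint coalitions by playing both profiles at once, and transfers to any `φ` that implies the
prevented formula on all plays.
-/

namespace Game

variable {A : Type} (G : Game A)

/-- The second conjunct of the semantics of `B s C φ`. -/
def CanPrevent (s : ℝ) (C : Finset A) (φ : Formula A) : Prop :=
  ∃ γ : A → G.Δ, (∑ a ∈ C, G.cost (γ a)) ≤ s ∧
    ∀ q ∈ G.P, (∀ a ∈ C, q.1 a = γ a) → ¬ Sat G q φ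

theorem sum_cost_piecewise [DecidableEq A] {C D : Finset A} (hCD : Disjoint C D)
    (γ δ : A → G.Δ) :
    ∑ a ∈ C ∪ D, G.cost (C.piecewise γ δ a) =
      ∑ a ∈ C, G.cost (γ a) + ∑ a ∈ D, G.cost (δ a) := by
  rw [Finset.sum_union hCD]
  congr 1
  · exact Finset.sum_congr rfl fun a ha => by rw [Finset.piecewise_eq_of_mem _ _ _ ha]
  · exact Finset.sum_congr rfl fun a ha => by
      rw [Finset.piecewise_eq_of_notMem _ _ _ (Finset.disjoint_right.mp hCD ha)]

variable {G}

theorem CanPrevent.mono [DecidableEq A] {s t : ℝ} {C D : Finset A} {φ : Formula A}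
    (h : G.CanPrevent s C φ) (hst : s ≤ t) (hCD : C ⊆ D) : G.CanPrevent t D φ := by
  obtain ⟨γ, hγ, hprevent⟩ := h
  -- the agents of `D \ C` join in with the zero-cost action
  refine ⟨C.piecewise γ fun _ => G.d0, ?_, fun q hq hagree => hprevent q hq fun a ha => ?_⟩
  · have hsum := G.sum_cost_piecewise (Finset.disjoint_sdiff (s := C) (t := D)) γ fun _ => G.d0
    rw [Finset.union_sdiff_of_subset hCD] at hsum
    simp only [G.cost_d0, Finset.sum_const_zero, add_zero] at hsum
    linarith
  · rw [hagree a (hCD ha), Finset.piecewise_eq_of_mem _ _ _ ha]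

theorem CanPrevent.union [DecidableEq A] {s t : ℝ} {C D : Finset A} {φ ψ : Formula A}
    (hφ : G.CanPrevent s C φ) (hψ : G.CanPrevent t D ψ) (hCD : Disjoint C D) :
    G.CanPrevent (s + t) (C ∪ D) (φ.or ψ) := by
  obtain ⟨γ, hγ, hpreventφ⟩ := hφ
  obtain ⟨δ, hδ, hpreventψ⟩ := hψ
  refine ⟨C.piecewise γ δ, ?_, fun q hq hagree hor => ?_⟩
  · rw [G.sum_cost_piecewise hCD]
    exact add_le_add hγ hδ
  · have hnφ : ¬ Sat G q φ := hpreventφ q hq fun a ha => by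
      rw [hagree a (Finset.mem_union_left _ ha), Finset.piecewise_eq_of_mem _ _ _ ha]
    refine hpreventψ q hq (fun a ha => ?_) (hor hnφ)
    rw [hagree a (Finset.mem_union_right _ ha),
      Finset.piecewise_eq_of_notMem _ _ _ (Finset.disjoint_right.mp hCD ha)]

theorem CanPrevent.of_imp {s : ℝ} {C : Finset A} {φ ψ : Formula A}
    (h : G.CanPrevent s C ψ) (himp : ∀ q ∈ G.P, Sat G q φ → Sat G q ψ) :
    G.CanPrevent s C φ :=
  let ⟨γ, hγ, hprevent⟩ := h
  ⟨γ, hγ, fun q hq hagree hφ => hprevent q hq hagree (himp q hq hφ)⟩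

theorem not_canPrevent_empty {s : ℝ} {φ : Formula A} {p : (A → G.Δ) × G.Ω}
    (hp : p ∈ G.P) (hφ : Sat G p φ) : ¬ G.CanPrevent s ∅ φ :=
  fun ⟨_, _, hprevent⟩ => hprevent p hp (by simp) hφ

end Game

section Satisfaction

variable {A : Type} {G : Game A} {p : (A → G.Δ) × G.Ω} {s t : ℝ} {C D : Finset A}
  {φ ψ : Formula A}

theorem sat_and_iff : Sat G p (φ.and ψ) ↔ Sat G p φ ∧ Sat G p ψ := by
  simp only [Formula.and, Sat, Classical.not_imp, not_not]

theorem sat_nbar_iff : Sat G p φ.nbar ↔ ∃ q ∈ G.P, Sat G q φ := by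
  simp only [Formula.nbar, Sat, not_forall, not_not, exists_prop]

theorem sat_of_tautology (hφ : Tautology φ) (G : Game A) (p : (A → G.Δ) × G.Ω) :
    Sat G p φ := by
  classical
  refine of_decide_eq_true (hφ (fun ψ => decide (Sat G p ψ)) (fun ψ => ?_) fun ψ χ => ?_) <;>
    by_cases hψ : Sat G p ψ <;> simp [Sat, hψ]

theorem sat_N_impl_self (hp : p ∈ G.P) : Sat G p ((Formula.N φ).impl φ) :=
  fun hN => hN p hp

theorem sat_B_impl_self : Sat G p ((Formula.B s C φ).impl φ) :=
  fun hB => hB.1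

theorem sat_N_distrib :
    Sat G p ((Formula.N (φ.impl ψ)).impl ((Formula.N φ).impl (Formula.N ψ))) :=
  fun himp hφ q hq => himp q hq (hφ q hq)

theorem sat_negative_introspection :
    Sat G p (((Formula.N φ).neg).impl (Formula.N ((Formula.N φ).neg))) :=
  fun hnN _ _ => hnN

theorem sat_none_to_blame (hp : p ∈ G.P) : Sat G p ((Formula.B s (∅ : Finset A) φ).neg) :=
  fun ⟨hφ, hprevent⟩ => Game.not_canPrevent_empty hp hφ hprevent

theorem sat_monotonicity [DecidableEq A] (hst : s ≤ t) (hCD : C ⊆ D) :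
    Sat G p ((Formula.B s C φ).impl (Formula.B t D φ)) :=
  fun ⟨hφ, hprevent⟩ => ⟨hφ, Game.CanPrevent.mono hprevent hst hCD⟩

theorem sat_joint_responsibility [DecidableEq A] (hCD : Disjoint C D) :
    Sat G p (((Formula.B s C φ).nbar.and (Formula.B t D ψ).nbar).impl
      ((φ.or ψ).impl (Formula.B (s + t) (C ∪ D) (φ.or ψ)))) := by
  intro hboth hor
  obtain ⟨hsomeφ, hsomeψ⟩ := sat_and_iff.mp hboth
  obtain ⟨_, _, _, hpreventφ⟩ := sat_nbar_iff.mp hsomeφ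
  obtain ⟨_, _, _, hpreventψ⟩ := sat_nbar_iff.mp hsomeψ
  exact ⟨hor, Game.CanPrevent.union hpreventφ hpreventψ hCD⟩

theorem sat_blame_for_cause :
    Sat G p ((Formula.N (φ.impl ψ)).impl
      ((Formula.B s C ψ).impl (φ.impl (Formula.B s C φ)))) :=
  fun himp ⟨_, hprevent⟩ hφ => ⟨hφ, Game.CanPrevent.of_imp hprevent himp⟩

theorem sat_fairness :
    Sat G p ((Formula.B s C φ).impl (Formula.N (φ.impl (Formula.B s C φ)))) :=
  fun ⟨_, hprevent⟩ _ _ hφ => ⟨hφ, hprevent⟩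

end Satisfaction

/-- Soundness: every theorem of the logic of blameworthiness
with sacrifice is satisfied at every play of every game. -/
theorem soundness {A : Type} [DecidableEq A] (φ : Formula A) (h : Prov φ) :
    ∀ (G : Game A), ∀ p ∈ G.P, Sat G p φ := by
  induction h with
  | taut hφ => exact fun G p _ => sat_of_tautology hφ G p
  | truthN => exact fun _ _ hp => sat_N_impl_self hp
  | truthB => exact fun _ _ _ => sat_B_impl_self
  | distr => exact fun _ _ _ => sat_N_distrib
  | negIntro => exact fun _ _ _ => sat_negative_introspection
  | noneToBlame => exact fun _ _ hp => sat_none_to_blame hp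
  | mono _ hst hCD => exact fun _ _ _ => sat_monotonicity hst hCD
  | joint _ _ hCD => exact fun _ _ _ => sat_joint_responsibility hCD
  | cause => exact fun _ _ _ => sat_blame_for_cause
  | fair => exact fun _ _ _ => sat_fairness
  | mp _ _ ihimp ih => exact fun G p hp => ihimp G p hp (ih G p hp)
  | nec _ ih => exact fun G _ _ q hq => ih G q hq
end

section
/- Derivability of Lemma 'five plus plus': for disjoint coalitions D₁,…,Dₙ ⊆ C with t₁ + … + tₙ ≤ s, the hypotheses ̄N B^{t₁}_{D₁}χ₁, …, ̄N B^{tₙ}_{Dₙ}χₙ and N(φ → χ₁ ∨ … ∨ χₙ) derive N(φ → B^s_C φ) in the proof system. -/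
section FivePlusPlusHelpers

set_option linter.unusedSectionVars false

variable {A : Type} [DecidableEq A]

/-! ### Propositional tautologies used as glue -/

lemma t_trans (a b c : Formula A) :
    Tautology ((a.impl b).impl ((b.impl c).impl (a.impl c))) := by
  intro v hn hi; simp only [hi]; cases v a <;> cases v b <;> cases v c <;> rfl

lemma t_conj (a b : Formula A) :
    Tautology (a.impl (b.impl (a.and b))) := by
  intro v hn hi; simp only [Formula.and, hi, hn]; cases v a <;> cases v b <;> rfl

lemma t_contra (a b : Formula A) :
    Tautology ((a.impl b).impl (b.neg.impl a.neg)) := by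
  intro v hn hi; simp only [hi, hn]; cases v a <;> cases v b <;> rfl

lemma t_contra2 (a b : Formula A) :
    Tautology ((a.neg.impl b).impl (b.neg.impl a)) := by
  intro v hn hi; simp only [hi, hn]; cases v a <;> cases v b <;> rfl

lemma t_contra3 (a b : Formula A) :
    Tautology ((a.impl b.neg).impl (b.impl a.neg)) := by
  intro v hn hi; simp only [hi, hn]; cases v a <;> cases v b <;> rfl

lemma t_orIntro (a b : Formula A) : Tautology (a.impl (a.or b)) := by
  intro v hn hi; simp only [Formula.or, hi, hn]; cases v a <;> cases v b <;> rfl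

lemma t_fbot (a b : Formula A) :
    Tautology ((a.impl Formula.fbot).impl (a.impl b)) := by
  intro v hn hi; simp only [Formula.fbot, hi, hn]
  cases v a <;> cases v b <;> cases v (Formula.var 0) <;> rfl

lemma t_contract (a b : Formula A) :
    Tautology ((a.impl (a.impl b)).impl (a.impl b)) := by
  intro v hn hi; simp only [hi]; cases v a <;> cases v b <;> rfl

/-! ### Provability-level helpers -/

/-- Hypothetical syllogism at the level of theorems. -/
lemma pTrans {a b c : Formula A} (h1 : Prov (a.impl b)) (h2 : Prov (b.impl c)) :
    Prov (a.impl c) :=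
  Prov.mp (Prov.mp (Prov.taut (t_trans a b c)) h1) h2

/-- Positive introspection `⊢ Nφ → NNφ`, derived from Truth and
Negative Introspection. -/
lemma posIntro (ψ : Formula A) :
    Prov ((Formula.N ψ).impl (Formula.N (Formula.N ψ))) := by
  have h5 : Prov ((Formula.N ψ).neg.impl (Formula.N (Formula.N ψ).neg)) :=
    Prov.negIntro
  have stepA : Prov ((Formula.N (Formula.N ψ).neg).neg.impl (Formula.N ψ)) :=
    Prov.mp (Prov.taut (t_contra2 (Formula.N ψ) (Formula.N (Formula.N ψ).neg))) h5
  have hii : Prov ((Formula.N ((Formula.N (Formula.N ψ).neg).neg)).impl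
      (Formula.N (Formula.N ψ))) :=
    Prov.mp Prov.distr (Prov.nec stepA)
  have tA : Prov ((Formula.N (Formula.N ψ).neg).impl (Formula.N ψ).neg) :=
    Prov.truthN
  have tB : Prov ((Formula.N ψ).impl ((Formula.N (Formula.N ψ).neg).neg)) :=
    Prov.mp (Prov.taut (t_contra3 (Formula.N (Formula.N ψ).neg) (Formula.N ψ))) tA
  have tC : Prov (((Formula.N (Formula.N ψ).neg).neg).impl
      (Formula.N ((Formula.N (Formula.N ψ).neg).neg))) := Prov.negIntro
  exact pTrans (pTrans tB tC) hii

/-! ### Derivability-level helpers -/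

/-- K-distribution of `N` inside a derivation. -/
lemma dK {X : Set (Formula A)} {a b : Formula A}
    (h1 : Derives X (Formula.N (a.impl b))) (h2 : Derives X (Formula.N a)) :
    Derives X (Formula.N b) :=
  Derives.mp (Derives.mp (Derives.thm Prov.distr) h1) h2

/-- Hypothetical syllogism under `N`, inside a derivation. -/
lemma dNtrans {X : Set (Formula A)} {a b c : Formula A}
    (h1 : Derives X (Formula.N (a.impl b))) (h2 : Derives X (Formula.N (b.impl c))) :
    Derives X (Formula.N (a.impl c)) :=
  dK (dK (Derives.thm (Prov.nec (Prov.taut (t_trans a b c)))) h1) h2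

/-! ### Bookkeeping for lists of triples -/

/-- Total degree `t₁ + ⋯ + tₙ`. -/
def sumT (l : List (ℝ × Finset A × Formula A)) : ℝ := (l.map fun x => x.1).sum

/-- Union `D₁ ∪ ⋯ ∪ Dₙ` of the coalitions. -/
def unionD (l : List (ℝ × Finset A × Formula A)) : Finset A :=
  l.foldr (fun x u => x.2.1 ∪ u) ∅

/-- The disjunction `χ₁ ∨ ⋯ ∨ χₙ`. -/
def orsOf (l : List (ℝ × Finset A × Formula A)) : Formula A :=
  bigOr (l.map fun x => x.2.2)

lemma unionD_foldr (l : List (ℝ × Finset A × Formula A)) (u : Finset A) :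
    l.foldr (fun x u => x.2.1 ∪ u) u = unionD l ∪ u := by
  induction l with
  | nil => simp [unionD]
  | cons a l ih =>
      show a.2.1 ∪ (l.foldr (fun x u => x.2.1 ∪ u) u) = (a.2.1 ∪ unionD l) ∪ u
      rw [ih, Finset.union_assoc]

lemma sumT_append (l : List (ℝ × Finset A × Formula A)) (x : ℝ × Finset A × Formula A) :
    sumT (l ++ [x]) = sumT l + x.1 := by
  simp [sumT]

lemma unionD_append (l : List (ℝ × Finset A × Formula A)) (x : ℝ × Finset A × Formula A) :
    unionD (l ++ [x]) = unionD l ∪ x.2.1 := by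
  show (l ++ [x]).foldr (fun x u => x.2.1 ∪ u) ∅ = _
  rw [List.foldr_append]
  show l.foldr (fun x u => x.2.1 ∪ u) (x.2.1 ∪ ∅) = _
  rw [unionD_foldr, Finset.union_empty]

lemma bigOr_append (l : List (Formula A)) (hl : l ≠ []) (b : Formula A) :
    bigOr (l ++ [b]) = (bigOr l).or b := by
  cases l with
  | nil => exact absurd rfl hl
  | cons a l => simp [bigOr, List.foldl_append]

lemma orsOf_append (l : List (ℝ × Finset A × Formula A)) (hl : l ≠ [])
    (x : ℝ × Finset A × Formula A) :
    orsOf (l ++ [x]) = (orsOf l).or x.2.2 := by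
  show bigOr ((l ++ [x]).map fun x => x.2.2) = _
  rw [List.map_append]
  exact bigOr_append _ (by simpa using hl) _

lemma disjoint_unionD {l : List (ℝ × Finset A × Formula A)} {d : Finset A}
    (h : ∀ y ∈ l, Disjoint y.2.1 d) : Disjoint (unionD l) d := by
  induction l with
  | nil => simp [unionD]
  | cons a l ih =>
      have e : unionD (a :: l) = a.2.1 ∪ unionD l := rfl
      rw [e, Finset.disjoint_union_left]
      exact ⟨h a (by simp), ih fun y hy => h y (by simp [hy])⟩

lemma sumT_nonneg {l : List (ℝ × Finset A × Formula A)} (h : ∀ x ∈ l, 0 ≤ x.1) :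
    0 ≤ sumT l := by
  apply List.sum_nonneg
  intro x hx
  simp only [List.mem_map] at hx
  obtain ⟨y, hy, rfl⟩ := hx
  exact h y hy

lemma unionD_subset {l : List (ℝ × Finset A × Formula A)} {C : Finset A}
    (h : ∀ x ∈ l, x.2.1 ⊆ C) : unionD l ⊆ C := by
  induction l with
  | nil => simp [unionD]
  | cons a l ih =>
      have e : unionD (a :: l) = a.2.1 ∪ unionD l := rfl
      rw [e]
      exact Finset.union_subset (h a (by simp)) (ih fun x hx => h x (by simp [hx]))

/-! ### The generalized Joint Responsibility lemma -/

/-- Base case: from the hypothesis `N̄ B^t_D χ` one derives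
`N (N̄ B^t_D χ)` (Negative Introspection) and `N (χ → B^t_D χ)`
(Fairness plus modal reasoning). -/
lemma base_lemma {X : Set (Formula A)} {t : ℝ} {D : Finset A} {χ : Formula A}
    (ht : 0 ≤ t) (hmem : (Formula.B t D χ).nbar ∈ X) :
    Derives X (Formula.N ((Formula.B t D χ).nbar)) ∧
    Derives X (Formula.N (χ.impl (Formula.B t D χ))) := by
  have hb : Derives X ((Formula.B t D χ).nbar) := Derives.hyp hmem
  constructor
  · exact Derives.mp (Derives.thm (Prov.negIntro (φ := (Formula.B t D χ).neg))) hb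
  · have p1 : Prov ((Formula.N (χ.impl (Formula.B t D χ))).neg.impl
        (Formula.B t D χ).neg) :=
      Prov.mp (Prov.taut (t_contra (Formula.B t D χ)
        (Formula.N (χ.impl (Formula.B t D χ))))) (Prov.fair ht)
    have p2 : Prov ((Formula.N ((Formula.N (χ.impl (Formula.B t D χ))).neg)).impl
        (Formula.N (Formula.B t D χ).neg)) :=
      Prov.mp Prov.distr (Prov.nec p1)
    have p3 : Prov ((Formula.N (χ.impl (Formula.B t D χ))).neg.impl
        (Formula.N ((Formula.N (χ.impl (Formula.B t D χ))).neg))) := Prov.negIntro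
    have p4 := pTrans p3 p2
    have p5 : Prov ((Formula.N (Formula.B t D χ).neg).neg.impl
        (Formula.N (χ.impl (Formula.B t D χ)))) :=
      Prov.mp (Prov.taut (t_contra2 (Formula.N (χ.impl (Formula.B t D χ)))
        (Formula.N (Formula.B t D χ).neg))) p4
    exact Derives.mp (Derives.thm p5) hb

/-- Inductive step: combine `N̄ B^T_U ρ` with the hypothesis `N̄ B^t_D χ`
using the Joint Responsibility axiom. -/
lemma step_lemma {X : Set (Formula A)} {T t : ℝ} {U D : Finset A} {ρ χ : Formula A}
    (hT : 0 ≤ T) (ht : 0 ≤ t) (hUD : Disjoint U D)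
    (IHb : Derives X (Formula.N ((Formula.B T U ρ).nbar)))
    (hypx : Derives X ((Formula.B t D χ).nbar)) :
    Derives X (Formula.N ((Formula.B (T + t) (U ∪ D) (ρ.or χ)).nbar)) ∧
    Derives X (Formula.N ((ρ.or χ).impl (Formula.B (T + t) (U ∪ D) (ρ.or χ)))) := by
  have nx : Derives X (Formula.N ((Formula.B t D χ).nbar)) :=
    Derives.mp (Derives.thm (Prov.negIntro (φ := (Formula.B t D χ).neg))) hypx
  have conj : Derives X (Formula.N (((Formula.B T U ρ).nbar).and
      ((Formula.B t D χ).nbar))) :=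
    dK (dK (Derives.thm (Prov.nec (Prov.taut
      (t_conj (Formula.B T U ρ).nbar (Formula.B t D χ).nbar)))) IHb) nx
  have jnt : Prov ((((Formula.B T U ρ).nbar).and ((Formula.B t D χ).nbar)).impl
      ((ρ.or χ).impl (Formula.B (T + t) (U ∪ D) (ρ.or χ)))) :=
    Prov.joint hT ht hUD
  have newA : Derives X (Formula.N ((ρ.or χ).impl
      (Formula.B (T + t) (U ∪ D) (ρ.or χ)))) :=
    dK (Derives.thm (Prov.nec jnt)) conj
  have ptr : Prov ((Formula.B T U ρ).impl (ρ.or χ)) :=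
    pTrans (Prov.truthB hT) (Prov.taut (t_orIntro ρ χ))
  have step1 : Derives X (Formula.N ((Formula.B T U ρ).impl
      (Formula.B (T + t) (U ∪ D) (ρ.or χ)))) :=
    dNtrans (Derives.thm (Prov.nec ptr)) newA
  have step2 : Derives X (Formula.N ((Formula.B (T + t) (U ∪ D) (ρ.or χ)).neg.impl
      (Formula.B T U ρ).neg)) :=
    dK (Derives.thm (Prov.nec (Prov.taut
      (t_contra (Formula.B T U ρ) (Formula.B (T + t) (U ∪ D) (ρ.or χ)))))) step1
  have step3 : Derives X ((Formula.N (Formula.B (T + t) (U ∪ D) (ρ.or χ)).neg).impl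
      (Formula.N (Formula.B T U ρ).neg)) :=
    Derives.mp (Derives.thm Prov.distr) step2
  have step4 : Derives X ((Formula.N (Formula.B T U ρ).neg).neg.impl
      (Formula.N (Formula.B (T + t) (U ∪ D) (ρ.or χ)).neg).neg) :=
    Derives.mp (Derives.thm (Prov.taut
      (t_contra (Formula.N (Formula.B (T + t) (U ∪ D) (ρ.or χ)).neg)
        (Formula.N (Formula.B T U ρ).neg)))) step3
  have nbB0 : Derives X ((Formula.B T U ρ).nbar) :=
    Derives.mp (Derives.thm Prov.truthN) IHb
  have nbB1 : Derives X ((Formula.B (T + t) (U ∪ D) (ρ.or χ)).nbar) :=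
    Derives.mp step4 nbB0
  have newB : Derives X (Formula.N ((Formula.B (T + t) (U ∪ D) (ρ.or χ)).nbar)) :=
    Derives.mp (Derives.thm
      (Prov.negIntro (φ := (Formula.B (T + t) (U ∪ D) (ρ.or χ)).neg))) nbB1
  exact ⟨newB, newA⟩

/-- Generalized Joint Responsibility: for a nonempty list of pairwise disjoint
coalitions, the hypotheses `N̄ B^{tᵢ}_{Dᵢ} χᵢ` derive
`N (N̄ B^{Σtᵢ}_{⋃Dᵢ}(χ₁ ∨ ⋯ ∨ χₙ))` and
`N ((χ₁ ∨ ⋯ ∨ χₙ) → B^{Σtᵢ}_{⋃Dᵢ}(χ₁ ∨ ⋯ ∨ χₙ))`. -/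
lemma main_lemma {X : Set (Formula A)} (l : List (ℝ × Finset A × Formula A)) :
    l ≠ [] →
    (∀ x ∈ l, 0 ≤ x.1) →
    (l.Pairwise fun x y => Disjoint x.2.1 y.2.1) →
    (∀ x ∈ l, (Formula.B x.1 x.2.1 x.2.2).nbar ∈ X) →
    Derives X (Formula.N ((Formula.B (sumT l) (unionD l) (orsOf l)).nbar)) ∧
    Derives X (Formula.N ((orsOf l).impl (Formula.B (sumT l) (unionD l) (orsOf l)))) := by
  induction l using List.reverseRecOn with
  | nil => intro hne _ _ _; exact absurd rfl hne
  | append_singleton l x ih =>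
    intro _ ht hdisj hX
    by_cases hl : l = []
    · subst hl
      have e1 : sumT [x] = x.1 := by simp [sumT]
      have e2 : unionD [x] = x.2.1 := by simp [unionD]
      have e3 : orsOf [x] = x.2.2 := rfl
      rw [List.nil_append, e1, e2, e3]
      exact base_lemma (ht x (by simp)) (hX x (by simp))
    · rw [List.pairwise_append] at hdisj
      obtain ⟨h1, -, h3⟩ := hdisj
      obtain ⟨IHb, -⟩ := ih hl (fun y hy => ht y (by simp [hy])) h1
        (fun y hy => hX y (by simp [hy]))
      have hx0 : (0:ℝ) ≤ x.1 := ht x (by simp)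
      have hT0 : 0 ≤ sumT l := sumT_nonneg (fun y hy => ht y (by simp [hy]))
      have hdUx : Disjoint (unionD l) x.2.1 :=
        disjoint_unionD (fun y hy => h3 y hy x (by simp))
      have hypx : Derives X ((Formula.B x.1 x.2.1 x.2.2).nbar) :=
        Derives.hyp (hX x (by simp))
      rw [sumT_append, unionD_append, orsOf_append l hl x]
      exact step_lemma hT0 hx0 hdUx IHb hypx

end FivePlusPlusHelpers
/-- Lemma "five plus plus" is derivable: for pairwise disjoint
coalitions `D₁,…,Dₙ ⊆ C` with `t₁ + ⋯ + tₙ ≤ s` (and each `tᵢ ≥ 0`,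
`0 ≤ s`), the hypotheses `N̄ B^{tᵢ}_{Dᵢ} χᵢ` and `N(φ → χ₁ ∨ ⋯ ∨ χₙ)`
derive `N(φ → B^s_C φ)`. -/
theorem five_plus_plus_derivable {A : Type} [DecidableEq A]
    (C : Finset A) (s : ℝ) (hs : 0 ≤ s) (φ : Formula A)
    (l : List (ℝ × Finset A × Formula A))
    (ht : ∀ x ∈ l, 0 ≤ x.1)
    (hsub : ∀ x ∈ l, x.2.1 ⊆ C)
    (hdisj : l.Pairwise fun x y => Disjoint x.2.1 y.2.1)
    (hsum : (l.map fun x => x.1).sum ≤ s) :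
    Derives
      ({χ : Formula A | ∃ x ∈ l, χ = (Formula.B x.1 x.2.1 x.2.2).nbar} ∪
        {Formula.N (φ.impl (bigOr (l.map fun x => x.2.2)))})
      (Formula.N (φ.impl (Formula.B s C φ))) := by
  by_cases hl : l = []
  · subst hl
    have hyp0 : Derives
        (({χ : Formula A | ∃ x ∈ ([] : List (ℝ × Finset A × Formula A)), χ =
            (Formula.B x.1 x.2.1 x.2.2).nbar} ∪
          {Formula.N (φ.impl (bigOr (([] : List (ℝ × Finset A × Formula A)).map
            fun x => x.2.2)))}))
        (Formula.N (φ.impl Formula.fbot)) :=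
      Derives.hyp (Set.mem_union_right _ (Set.mem_singleton _))
    exact dK (Derives.thm (Prov.nec (Prov.taut (t_fbot φ (Formula.B s C φ))))) hyp0
  · obtain ⟨-, ha⟩ := main_lemma (X :=
        ({χ : Formula A | ∃ x ∈ l, χ = (Formula.B x.1 x.2.1 x.2.2).nbar} ∪
          {Formula.N (φ.impl (bigOr (l.map fun x => x.2.2)))})) l hl ht hdisj
      (fun x hx => Set.mem_union_left _ ⟨x, hx, rfl⟩)
    have c1 : Derives
        ({χ : Formula A | ∃ x ∈ l, χ = (Formula.B x.1 x.2.1 x.2.2).nbar} ∪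
          {Formula.N (φ.impl (bigOr (l.map fun x => x.2.2)))})
        (Formula.N (φ.impl (orsOf l))) :=
      Derives.hyp (Set.mem_union_right _ (Set.mem_singleton _))
    have hT0 : 0 ≤ sumT l := sumT_nonneg ht
    have hTs : sumT l ≤ s := hsum
    have hUC : unionD l ⊆ C := unionD_subset hsub
    have c3 : Prov ((Formula.B (sumT l) (unionD l) (orsOf l)).impl
        (Formula.B s C (orsOf l))) := Prov.mono hT0 hTs hUC
    have c4 := Derives.mp (Derives.thm (posIntro (φ.impl (orsOf l)))) c1
    have c5 := dK (Derives.thm (Prov.nec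
      (Prov.cause (s := s) (C := C) (φ := φ) (ψ := orsOf l) hs))) c4
    have c6 := dNtrans c1 ha
    have c7 := dNtrans c6 (Derives.thm (Prov.nec c3))
    have c8 := dNtrans c7 c5
    exact dK (Derives.thm (Prov.nec (Prov.taut (t_contract φ (Formula.B s C φ))))) c8
end
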